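/- Let R be the 8×8 block-circulant matrix R₈ = (1/2)·circulant(J, O, O, Y) with 2×2 blocks, and let B be the adjacency matrix circulant(0,0,1,0,0,0,1,0) (the 8×8 circulant 0/1 matrix with ones in positions 2 and 6 of the first row, 0-indexed). Then RᵀBR = B, and moreover R₈ factors as a product of two regular orthogonal matrices each of which is block-diagonal with two 4×4 blocks equal to either (1/2)(J₄ − 2I₄) or I₄ (after a suitable simultaneous permutation of coordinates): specifically R₈ = (1/2)[[J,Y,O,O],[Y,J,O,O],[O,O,J,Y],[O,O,Y,J]] · (1/2)[[2I₂,O,O,O],[O,J,O,Y],[O,O,2I₂,O],[O,Y,O,J]]. -/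
import Mathlib


open Matrix

/-- `R₈ = (1/2)·circulant(J, O, O, Y)` with `2×2` blocks. -/
noncomputable def R8 : Matrix (Fin 8) (Fin 8) ℝ :=
  (1/2 : ℝ) • !![(1 : ℝ), 1, 0, 0, 0, 0, 1, -1;
                  1, 1, 0, 0, 0, 0, -1, 1;
                  1, -1, 1, 1, 0, 0, 0, 0;
                  -1, 1, 1, 1, 0, 0, 0, 0;
                  0, 0, 1, -1, 1, 1, 0, 0;
                  0, 0, -1, 1, 1, 1, 0, 0;
                  0, 0, 0, 0, 1, -1, 1, 1;
                  0, 0, 0, 0, -1, 1, 1, 1]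

/-- The circulant adjacency matrix with first row `(0,0,1,0,0,0,1,0)`. -/
noncomputable def B8 : Matrix (Fin 8) (Fin 8) ℝ :=
  Matrix.of fun i j => if (j - i : Fin 8) = 2 ∨ (j - i : Fin 8) = 6 then 1 else 0


set_option maxHeartbeats 8000000

lemma B8_eq' : B8 = !![0,0,1,0,0,0,1,0;
                      0,0,0,1,0,0,0,1;
                      1,0,0,0,1,0,0,0;
                      0,1,0,0,0,1,0,0;
                      0,0,1,0,0,0,1,0;
                      0,0,0,1,0,0,0,1;
                      1,0,0,0,1,0,0,0;
                      0,1,0,0,0,1,0,0] := by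
  ext i j
  fin_cases i <;> fin_cases j <;>
    norm_num [B8, Matrix.cons_val_succ, Fin.ext_iff] <;> decide

noncomputable def M8 : Matrix (Fin 8) (Fin 8) ℝ :=
  (1/2 : ℝ) • !![(1 : ℝ), -1, 1, 1, 1, -1, 1, 1;
                  -1, 1, 1, 1, -1, 1, 1, 1;
                  1, 1, 1, -1, 1, 1, 1, -1;
                  1, 1, -1, 1, 1, 1, -1, 1;
                  1, -1, 1, 1, 1, -1, 1, 1;
                  -1, 1, 1, 1, -1, 1, 1, 1;
                  1, 1, 1, -1, 1, 1, 1, -1;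
                  1, 1, -1, 1, 1, 1, -1, 1]

lemma hBR : B8 * R8 = M8 := by
  ext i j
  fin_cases i <;> fin_cases j <;>
    norm_num [R8, B8_eq', M8, Matrix.mul_apply, Fin.sum_univ_succ, Matrix.cons_val_zero,
      Matrix.cons_val_succ]

lemma hRTM : R8ᵀ * M8 = B8 := by
  ext i j
  fin_cases i <;> fin_cases j <;>
    norm_num [R8, B8_eq', M8, Matrix.mul_apply, Fin.sum_univ_succ, Matrix.cons_val_zero,
      Matrix.cons_val_succ]

/-- Example 'reducible': `R₈ᵀ B R₈ = B`, and `R₈` factors as a product of two regular orthogonal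
matrices, each block-diagonal with two `4×4` blocks equal to `(1/2)(J₄ − 2I₄)` or `I₄` after a
suitable simultaneous permutation of coordinates: specifically
`R₈ = (1/2)[[J,Y,O,O],[Y,J,O,O],[O,O,J,Y],[O,O,Y,J]] ·
(1/2)[[2I,O,O,O],[O,J,O,Y],[O,O,2I,O],[O,Y,O,J]]`. -/
theorem stmt_17 :
    R8ᵀ * B8 * R8 = B8 ∧
    (((1/2 : ℝ) • !![(1 : ℝ), 1, 1, -1, 0, 0, 0, 0;
                     1, 1, -1, 1, 0, 0, 0, 0;
                     1, -1, 1, 1, 0, 0, 0, 0;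
                     -1, 1, 1, 1, 0, 0, 0, 0;
                     0, 0, 0, 0, 1, 1, 1, -1;
                     0, 0, 0, 0, 1, 1, -1, 1;
                     0, 0, 0, 0, 1, -1, 1, 1;
                     0, 0, 0, 0, -1, 1, 1, 1])ᵀ *
      ((1/2 : ℝ) • !![(1 : ℝ), 1, 1, -1, 0, 0, 0, 0;
                     1, 1, -1, 1, 0, 0, 0, 0;
                     1, -1, 1, 1, 0, 0, 0, 0;
                     -1, 1, 1, 1, 0, 0, 0, 0;
                     0, 0, 0, 0, 1, 1, 1, -1;
                     0, 0, 0, 0, 1, 1, -1, 1;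
                     0, 0, 0, 0, 1, -1, 1, 1;
                     0, 0, 0, 0, -1, 1, 1, 1]) = 1) ∧
    (((1/2 : ℝ) • !![(2 : ℝ), 0, 0, 0, 0, 0, 0, 0;
                     0, 2, 0, 0, 0, 0, 0, 0;
                     0, 0, 1, 1, 0, 0, 1, -1;
                     0, 0, 1, 1, 0, 0, -1, 1;
                     0, 0, 0, 0, 2, 0, 0, 0;
                     0, 0, 0, 0, 0, 2, 0, 0;
                     0, 0, 1, -1, 0, 0, 1, 1;
                     0, 0, -1, 1, 0, 0, 1, 1])ᵀ *
      ((1/2 : ℝ) • !![(2 : ℝ), 0, 0, 0, 0, 0, 0, 0;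
                     0, 2, 0, 0, 0, 0, 0, 0;
                     0, 0, 1, 1, 0, 0, 1, -1;
                     0, 0, 1, 1, 0, 0, -1, 1;
                     0, 0, 0, 0, 2, 0, 0, 0;
                     0, 0, 0, 0, 0, 2, 0, 0;
                     0, 0, 1, -1, 0, 0, 1, 1;
                     0, 0, -1, 1, 0, 0, 1, 1]) = 1) ∧
    R8 = ((1/2 : ℝ) • !![(1 : ℝ), 1, 1, -1, 0, 0, 0, 0;
                     1, 1, -1, 1, 0, 0, 0, 0;
                     1, -1, 1, 1, 0, 0, 0, 0;
                     -1, 1, 1, 1, 0, 0, 0, 0;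
                     0, 0, 0, 0, 1, 1, 1, -1;
                     0, 0, 0, 0, 1, 1, -1, 1;
                     0, 0, 0, 0, 1, -1, 1, 1;
                     0, 0, 0, 0, -1, 1, 1, 1]) *
         ((1/2 : ℝ) • !![(2 : ℝ), 0, 0, 0, 0, 0, 0, 0;
                     0, 2, 0, 0, 0, 0, 0, 0;
                     0, 0, 1, 1, 0, 0, 1, -1;
                     0, 0, 1, 1, 0, 0, -1, 1;
                     0, 0, 0, 0, 2, 0, 0, 0;
                     0, 0, 0, 0, 0, 2, 0, 0;
                     0, 0, 1, -1, 0, 0, 1, 1;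
                     0, 0, -1, 1, 0, 0, 1, 1]) := by
  refine ⟨by rw [Matrix.mul_assoc, hBR, hRTM], ?_, ?_, ?_⟩ <;>
  · ext i j
    fin_cases i <;> fin_cases j <;>
      norm_num [R8, Matrix.mul_apply, Fin.sum_univ_succ, Matrix.cons_val_zero,
        Matrix.cons_val_succ, Matrix.one_apply, Fin.ext_iff]
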